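/- arXiv:1611.01328 — 2 statements merged into one kernel-verified Lean document; each statement's English description precedes it below -/
import Mathlib

section
/- Interpolants from universal strategies: let F = ∃p Qq Qr.[A(p,q) ∧ B(p,r)] be a false QBF with disjoint variable blocks q, r, and let F^b = ∃p ∀b Qq Qr.[(A(p,q) ∨ b) ∧ (B(p,r) ∨ ¬b)] where b is a fresh universal variable. Then for any winning strategy of the universal player in F^b, the strategy function σ(p) for b is an interpolant for F: σ(a) = 0 implies Qq.A(a,q) is false, and σ(a) = 1 implies Qr.B(a,r) is false. -/
/-- Truth of a prenex QBF with quantifier prefix `qs` (`true` = universal,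
`false` = existential) and matrix `φ` on the full play. -/
def QTruth : List Bool → (List Bool → Bool) → Prop
  | [], φ => φ [] = true
  | q :: qs, φ =>
      if q then ∀ b : Bool, QTruth qs (fun l => φ (b :: l))
      else ∃ b : Bool, QTruth qs (fun l => φ (b :: l))

/-- A play that follows `s` everywhere, starting from prefix `p`. -/
def followStrat (s : List Bool → Bool) : ℕ → List Bool → List Bool
  | 0, _ => []
  | n + 1, p => s p :: followStrat s n (p ++ [s p])

lemma followStrat_length (s : List Bool → Bool) : ∀ n p, (followStrat s n p).length = n := by
  intro n
  induction n with
  | zero => intro p; rfl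
  | succ n ih => intro p; simp [followStrat, ih]

lemma followStrat_get (s : List Bool → Bool) :
    ∀ n p i, i < n → (followStrat s n p)[i]! = s (p ++ (followStrat s n p).take i) := by
  intro n
  induction n with
  | zero => intro p i hi; omega
  | succ n ih =>
    intro p i hi
    cases i with
    | zero => simp [followStrat]
    | succ j =>
      have hj : j < n := by omega
      have := ih (p ++ [s p]) j hj
      simp only [followStrat, List.getElem!_cons_succ, List.take_succ_cons]
      rw [this, List.append_assoc]
      rfl

/-- If the universal player has a strategy `s` such that every consistent play
falsifies the matrix, then the QBF is false. -/
lemma falsify : ∀ (Qs : List Bool) (φ : List Bool → Bool) (s : List Bool → Bool),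
    (∀ bs : List Bool, bs.length = Qs.length →
      (∀ i, (hi : i < Qs.length) → Qs[i] = true → bs[i]! = s (bs.take i)) →
      φ bs = false) → ¬ QTruth Qs φ := by
  intro Qs
  induction Qs with
  | nil =>
    intro φ s h hT
    have := h [] rfl (by intro i hi; simp at hi)
    simp [QTruth] at hT
    rw [hT] at this
    exact Bool.true_eq_false.mp this
  | cons q qs ih =>
    intro φ s h hT
    cases q with
    | true =>
      simp only [QTruth, if_pos] at hT
      have hT' := hT (s [])
      refine ih (fun l => φ (s [] :: l)) (fun l => s (s [] :: l)) ?_ hT'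
      intro bs hlen hcons
      apply h (s [] :: bs) (by simp [hlen])
      intro i hi hQi
      cases i with
      | zero => simp
      | succ j =>
        simp only [List.getElem!_cons_succ, List.take_succ_cons]
        exact hcons j (by simpa using hi) (by simpa using hQi)
    | false =>
      simp only [QTruth, if_neg] at hT
      obtain ⟨b, hb⟩ := hT
      refine ih (fun l => φ (b :: l)) (fun l => s (b :: l)) ?_ hb
      intro bs hlen hcons
      apply h (b :: bs) (by simp [hlen])
      intro i hi hQi
      cases i with
      | zero => simp at hQi
      | succ j =>
        simp only [List.getElem!_cons_succ, List.take_succ_cons]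
        exact hcons j (by simpa using hi) (by simpa using hQi)

lemma getElem!_append_left {l m : List Bool} {i : ℕ} (h : i < l.length) :
    (l ++ m)[i]! = l[i]! := by
  rw [getElem!_pos (l ++ m) i (by simp; omega), getElem!_pos l i h, List.getElem_append_left]

lemma getElem!_append_right {l m : List Bool} {i : ℕ} (h : l.length ≤ i)
    (h2 : i - l.length < m.length) : (l ++ m)[i]! = m[i - l.length]! := by
  rw [getElem!_pos (l ++ m) i (by simp; omega), getElem!_pos m (i - l.length) h2, List.getElem_append_right h]

/-- Interpolants from universal strategies. Let `F = ∃p Qq Qr.[A(p,q) ∧ B(p,r)]`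
and `F^b = ∃p ∀b Qq Qr.[(A(p,q) ∨ b) ∧ (B(p,r) ∨ ¬b)]`. Suppose the universal
player has a winning strategy in `F^b` whose component for the fresh universal
variable `b` is `σ(p)`: for every assignment `a` to `p` there is a strategy `s`
for the universal player on the remaining prefix `∀b Qq Qr` playing `σ(a)` for
`b`, such that every play consistent with `s` falsifies the matrix. Then `σ` is
an interpolant: `σ(a) = 0` implies `Qq.A(a,q)` is false and `σ(a) = 1` implies
`Qr.B(a,r)` is false. -/
theorem strategy_gives_interpolant {P : Type} (Qq Qr : List Bool)
    (A B : (P → Bool) → List Bool → Bool) (σ : (P → Bool) → Bool)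
    (hwin : ∀ a : P → Bool, ∃ s : List Bool → Bool,
      s [] = σ a ∧
      ∀ bs : List Bool, bs.length = (true :: (Qq ++ Qr)).length →
        (∀ i, (hi : i < (true :: (Qq ++ Qr)).length) →
          (true :: (Qq ++ Qr))[i] = true → bs[i]! = s (bs.take i)) →
        ((A a ((bs.drop 1).take Qq.length) || bs[0]!) &&
         (B a ((bs.drop 1).drop Qq.length) || !bs[0]!)) = false) :
    ∀ a : P → Bool,
      (σ a = false → ¬ QTruth Qq (A a)) ∧
      (σ a = true → ¬ QTruth Qr (B a)) := by
  intro a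
  obtain ⟨s, hs0, hs⟩ := hwin a
  constructor
  · -- σ a = false : refute Qq. A a
    intro hσ
    apply falsify Qq (A a) (fun l => s (false :: l))
    intro q hlenq hcons
    -- fill in the r-part by following s
    set r := followStrat s Qr.length (false :: q) with hr
    have hlenr : r.length = Qr.length := followStrat_length s _ _
    set bs : List Bool := false :: (q ++ r) with hbs
    have key := hs bs (by simp [hbs, hlenq, hlenr])
    have hb0 : bs[0]! = false := by simp [hbs]
    have hc : ∀ i, (hi : i < (true :: (Qq ++ Qr)).length) →
        (true :: (Qq ++ Qr))[i] = true → bs[i]! = s (bs.take i) := by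
      intro i hi hQi
      cases i with
      | zero => simpa [hbs, hσ] using hs0.symm ▸ hσ ▸ rfl
      | succ j =>
        simp only [hbs, List.getElem!_cons_succ, List.take_succ_cons]
        by_cases hj : j < Qq.length
        · have hQj : Qq[j] = true := by
            have : (Qq ++ Qr)[j]'(by simp; omega) = true := by simpa using hQi
            rwa [List.getElem_append_left hj] at this
          rw [getElem!_append_left (by omega : j < q.length),
            List.take_append_of_le_length (by omega)]
          exact hcons j hj hQj
        · push_neg at hj
          have hk : j - Qq.length < Qr.length := by
            simp at hi; omega
          rw [getElem!_append_right (by omega) (by omega),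
            List.take_append, List.take_of_length_le (by omega)]
          rw [hlenq] at *
          have := followStrat_get s Qr.length (false :: q) (j - Qq.length) hk
          rw [← hr] at this
          rw [this]
          rfl
    have := hs bs (by simp [hbs, hlenq, hlenr]) hc
    rw [hb0] at this
    simp only [Bool.or_false, Bool.not_false, Bool.or_true, Bool.and_true] at this
    have hdrop : (bs.drop 1).take Qq.length = q := by
      simp [hbs, List.take_append, hlenq, List.take_of_length_le (le_refl q.length) ]
    rwa [hdrop] at this
  · -- σ a = true : refute Qr. B a
    intro hσ
    set qf := followStrat s Qq.length [true] with hqf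
    have hlenqf : qf.length = Qq.length := followStrat_length s _ _
    apply falsify Qr (B a) (fun l => s (true :: qf ++ l))
    intro r hlenr hcons
    set bs : List Bool := true :: (qf ++ r) with hbs
    have hb0 : bs[0]! = true := by simp [hbs]
    have hc : ∀ i, (hi : i < (true :: (Qq ++ Qr)).length) →
        (true :: (Qq ++ Qr))[i] = true → bs[i]! = s (bs.take i) := by
      intro i hi hQi
      cases i with
      | zero => simpa [hbs] using hs0.symm ▸ hσ ▸ rfl
      | succ j =>
        simp only [hbs, List.getElem!_cons_succ, List.take_succ_cons]
        by_cases hj : j < Qq.length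
        · rw [getElem!_append_left (by omega : j < qf.length),
            List.take_append_of_le_length (by omega)]
          have := followStrat_get s Qq.length [true] j hj
          rw [← hqf] at this
          rw [this]
          rfl
        · push_neg at hj
          have hk : j - Qq.length < Qr.length := by
            simp at hi; omega
          have hQj : Qr[j - Qq.length] = true := by
            have : (Qq ++ Qr)[j]'(by simp; omega) = true := by simpa using hQi
            rwa [List.getElem_append_right (by omega)] at this
          rw [getElem!_append_right (by omega) (by omega),
            List.take_append, List.take_of_length_le (by omega), hlenqf]
          have := hcons (j - Qq.length) hk hQj
          rw [this]
          simp [List.cons_append]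
    have := hs bs (by simp [hbs, hlenqf, hlenr]) hc
    rw [hb0] at this
    simp only [Bool.or_true, Bool.true_and, Bool.not_true, Bool.or_false] at this
    have hdrop : (bs.drop 1).drop Qq.length = r := by
      simp [hbs, ← hlenqf]
    rwa [hdrop] at this
end

section
/- If F = ∃p Qq Qr.[A(p,q) ∧ B(p,r)] is false, then F^b = ∃p ∀b Qq Qr.[(A(p,q) ∨ b) ∧ (B(p,r) ∨ ¬b)] is also false. -/
lemma qcongr : ∀ (qs : List Bool) (φ ψ : List Bool → Bool),
    (∀ l, φ l = ψ l) → QTruth qs φ → QTruth qs ψ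
  | [], φ, ψ, h, H => by simpa [QTruth, ← h []] using H
  | q :: qs, φ, ψ, h, H => by
    cases q
    · simp only [QTruth, if_neg (by decide : ¬ (false = true))] at H ⊢
      obtain ⟨b, hb⟩ := H
      exact ⟨b, qcongr qs _ _ (fun l => h _) hb⟩
    · simp only [QTruth, if_pos rfl] at H ⊢
      exact fun b => qcongr qs _ _ (fun l => h _) (H b)

lemma qconst : ∀ (rs : List Bool) (c : Bool) (g : List Bool → Bool),
    QTruth rs (fun l => c && g l) ↔ (c = true ∧ QTruth rs g)
  | [], c, g => by cases c <;> simp [QTruth]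
  | r :: rs, c, g => by
    cases r
    · simp only [QTruth, if_neg (by decide : ¬ (false = true))]
      constructor
      · rintro ⟨b, hb⟩
        rw [qconst rs c _] at hb
        exact ⟨hb.1, b, hb.2⟩
      · rintro ⟨hc, b, hb⟩
        exact ⟨b, (qconst rs c _).mpr ⟨hc, hb⟩⟩
    · simp only [QTruth, if_pos rfl]
      constructor
      · intro H
        have h1 := (qconst rs c _).mp (H true)
        exact ⟨h1.1, fun b => ((qconst rs c _).mp (H b)).2⟩
      · rintro ⟨hc, H⟩ b
        exact (qconst rs c _).mpr ⟨hc, H b⟩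

lemma qsplit : ∀ (qs : List Bool) (rs : List Bool) (f g : List Bool → Bool),
    QTruth (qs ++ rs) (fun l => f (l.take qs.length) && g (l.drop qs.length))
      ↔ (QTruth qs f ∧ QTruth rs g)
  | [], rs, f, g => by
    simp only [List.nil_append, List.length_nil, List.take_zero, List.drop_zero]
    rw [qconst]
    rfl
  | q :: qs, rs, f, g => by
    cases q
    · simp only [List.cons_append, QTruth, if_neg (by decide : ¬ (false = true))]
      constructor
      · rintro ⟨b, hb⟩
        have := (qsplit qs rs (fun l => f (b :: l)) g).mp
          (qcongr _ _ (fun l => f (b :: l.take qs.length) && g (l.drop qs.length))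
            (fun l => by simp) hb)
        exact ⟨⟨b, this.1⟩, this.2⟩
      · rintro ⟨⟨b, hb⟩, hg⟩
        refine ⟨b, qcongr _ (fun l => f (b :: l.take qs.length) && g (l.drop qs.length)) _
          (fun l => by simp) ?_⟩
        exact (qsplit qs rs (fun l => f (b :: l)) g).mpr ⟨hb, hg⟩
    · simp only [List.cons_append, QTruth, if_pos rfl]
      constructor
      · intro H
        have h := fun b => (qsplit qs rs (fun l => f (b :: l)) g).mp
          (qcongr _ _ (fun l => f (b :: l.take qs.length) && g (l.drop qs.length))
            (fun l => by simp) (H b))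
        exact ⟨fun b => (h b).1, (h true).2⟩
      · rintro ⟨hf, hg⟩ b
        exact qcongr _ (fun l => f (b :: l.take qs.length) && g (l.drop qs.length)) _
          (fun l => by simp)
          ((qsplit qs rs (fun l => f (b :: l)) g).mpr ⟨hf b, hg⟩)

/-- If `F = ∃p Qq Qr.[A(p,q) ∧ B(p,r)]` is false, then so is
`F^b = ∃p ∀b Qq Qr.[(A(p,q) ∨ b) ∧ (B(p,r) ∨ ¬b)]`, obtained by adding a fresh
universal variable `b` right after the `p`-block, disjoining `b` with the
`A`-part and `¬b` with the `B`-part. -/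
theorem Fb_false_of_F_false {P : Type} (Qq Qr : List Bool)
    (A B : (P → Bool) → List Bool → Bool)
    (hF : ¬ ∃ a : P → Bool, QTruth (Qq ++ Qr)
        (fun l => A a (l.take Qq.length) && B a (l.drop Qq.length))) :
    ¬ ∃ a : P → Bool, ∀ b : Bool, QTruth (Qq ++ Qr)
        (fun l => (A a (l.take Qq.length) || b) && (B a (l.drop Qq.length) || !b)) := by
  rintro ⟨a, ha⟩
  apply hF
  refine ⟨a, ?_⟩
  have h1 : QTruth Qq (A a) := by
    have := qcongr _ _
      (fun l => A a (l.take Qq.length) && (fun _ : List Bool => true) (l.drop Qq.length))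
      (fun l => by simp) (ha false)
    exact ((qsplit Qq Qr (A a) (fun _ => true)).mp this).1
  have h2 : QTruth Qr (B a) := by
    have := qcongr _ _
      (fun l => (fun _ : List Bool => true) (l.take Qq.length) && B a (l.drop Qq.length))
      (fun l => by simp) (ha true)
    exact ((qsplit Qq Qr (fun _ => true) (B a)).mp this).2
  exact (qsplit Qq Qr (A a) (B a)).mpr ⟨h1, h2⟩
end
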